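/- Let h>0 and 0<s<1, and let u,v:ℤ→ℝ satisfy Σ_j |u_j|²<∞ and Σ_j |v_j|²<∞. Then h·Σ_{j∈ℤ} ((-Δ_h)^s u_j)·v_j = (h/2)·Σ_{j∈ℤ}Σ_{m∈ℤ, m≠j} (u_j−u_m)(v_j−v_m)·K_s^h(j−m), all sums being absolutely convergent. -/

import Mathlib

/-- The kernel of the fractional discrete Laplacian on the mesh of size `h`. -/
noncomputable def Ksh (h s : ℝ) (m : ℤ) : ℝ :=
  if m = 0 then 0 else
    ((4 : ℝ) ^ s * Real.Gamma (1/2 + s) / (Real.sqrt Real.pi * (Real.Gamma (1 - s) / s))) *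
      (Real.Gamma (|(m : ℝ)| - s) / (h ^ (2 * s) * Real.Gamma (|(m : ℝ)| + 1 + s)))

/-- The fractional discrete Laplacian `(-Δ_h)^s u_j = Σ_{m ≠ j} (u_j - u_m) K_s^h(j-m)`. -/
noncomputable def fracLap (h s : ℝ) (u : ℤ → ℝ) (j : ℤ) : ℝ :=
  ∑' m : ℤ, (u j - u m) * Ksh h s (j - m)

/-! The only properties of the kernel that matter are that it is even, nonnegative and summable;
summability comes from `Γ(x - s) / Γ(x + 1 + s) = (d x - d (x + 1)) / (2 s)` with
`d x = Γ(x - s) / Γ(x + s)` positive, so the series over `m ≥ 1` telescopes. The identity itself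
is then the symmetrisation `(u_j - u_m)(v_j - v_m) K = F(j, m) + F(m, j)` of the absolutely
summable family `F(j, m) = (u_j - u_m) v_j K(j - m)`, whose absolute summability follows from
`|ab| ≤ (a² + b²) / 2` and `∑_{j,m} (u_j - u_m)² K(j - m) ≤ 4 ‖K‖₁ ‖u‖₂²`. -/

open Real

lemma Ksh_neg (h s : ℝ) (m : ℤ) : Ksh h s (-m) = Ksh h s m := by
  simp [Ksh]

lemma Ksh_nonneg {h s : ℝ} (hh : 0 < h) (hs0 : 0 < s) (hs1 : s < 1) (m : ℤ) :
    0 ≤ Ksh h s m := by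
  unfold Ksh
  split_ifs with hm
  · exact le_rfl
  have hm1 : (1 : ℝ) ≤ |(m : ℝ)| := by
    rw [← Int.cast_abs]
    exact_mod_cast Int.one_le_abs hm
  have := Gamma_pos_of_pos (show 0 < 1 / 2 + s by linarith)
  have := Gamma_pos_of_pos (show 0 < 1 - s by linarith)
  have := Gamma_pos_of_pos (show 0 < |(m : ℝ)| - s by linarith)
  have := Gamma_pos_of_pos (show 0 < |(m : ℝ)| + 1 + s by linarith)
  have := rpow_pos_of_pos hh (2 * s)
  positivity

lemma Gamma_sub_div_Gamma_add_one_add {s x : ℝ} (hs : 0 < s) (hx : s < x) :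
    Gamma (x - s) / Gamma (x + 1 + s)
      = (Gamma (x - s) / Gamma (x + s) - Gamma (x + 1 - s) / Gamma (x + 1 + s)) / (2 * s) := by
  have hΓ : Gamma (x + s) ≠ 0 := (Gamma_pos_of_pos (by linarith)).ne'
  have hxs : x + s ≠ 0 := by linarith
  rw [show x + 1 + s = (x + s) + 1 by ring, Gamma_add_one hxs,
    show x + 1 - s = (x - s) + 1 by ring, Gamma_add_one (by linarith)]
  field_simp
  ring

lemma summable_of_eq_sub_succ {f d : ℕ → ℝ} (hf : ∀ n, 0 ≤ f n) (hd : ∀ n, 0 ≤ d n)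
    (hfd : ∀ n, f n = d n - d (n + 1)) : Summable f :=
  summable_of_sum_range_le hf fun n => by
    rw [Finset.sum_congr rfl fun k _ => hfd k, Finset.sum_range_sub']
    linarith [hd n]

lemma summable_Ksh_nat_add_one {h s : ℝ} (hh : 0 < h) (hs0 : 0 < s) (hs1 : s < 1) :
    Summable fun n : ℕ => Ksh h s (n + 1) := by
  set C := (4 : ℝ) ^ s * Gamma (1/2 + s) / (√π * (Gamma (1 - s) / s)) / h ^ (2 * s) / (2 * s)
  set d : ℕ → ℝ := fun n => C * (Gamma (n + 1 - s) / Gamma (n + 1 + s))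
  have hC : 0 ≤ C := by
    have := Gamma_pos_of_pos (show 0 < 1 / 2 + s by linarith)
    have := Gamma_pos_of_pos (show 0 < 1 - s by linarith)
    have := rpow_pos_of_pos hh (2 * s)
    positivity
  refine summable_of_eq_sub_succ (d := d) (fun n => Ksh_nonneg hh hs0 hs1 _) (fun n => ?_)
    (fun n => ?_)
  · have := Gamma_pos_of_pos (show 0 < (n : ℝ) + 1 - s by linarith [n.cast_nonneg (α := ℝ)])
    have := Gamma_pos_of_pos (show 0 < (n : ℝ) + 1 + s by positivity)
    positivity
  · have habs : |(((n : ℤ) + 1 : ℤ) : ℝ)| = n + 1 := by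
      push_cast
      exact abs_of_nonneg (by positivity)
    rw [Ksh, if_neg (by omega), habs, div_mul_eq_div_div_swap (Gamma _),
      Gamma_sub_div_Gamma_add_one_add hs0 (by linarith [n.cast_nonneg (α := ℝ)] : s < n + 1)]
    simp only [d, C]
    push_cast
    ring

lemma summable_Ksh {h s : ℝ} (hh : 0 < h) (hs0 : 0 < s) (hs1 : s < 1) :
    Summable (Ksh h s) := by
  have hpos := summable_Ksh_nat_add_one hh hs0 hs1
  refine .of_nat_of_neg_add_one ((summable_nat_add_iff 1).1 (by exact_mod_cast hpos)) ?_
  exact hpos.congr fun n => (Ksh_neg h s _).symm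

lemma summable_abs_mul_mul_of_summable_sq_mul {ι : Type*} {f g w : ι → ℝ} (hw : ∀ i, 0 ≤ w i)
    (hf : Summable fun i => f i ^ 2 * w i) (hg : Summable fun i => g i ^ 2 * w i) :
    Summable fun i => |f i * g i * w i| := by
  refine .of_nonneg_of_le (fun i => abs_nonneg _) (fun i => ?_) ((hf.add hg).div_const 2)
  rw [abs_mul, abs_mul, abs_of_nonneg (hw i), ← sq_abs (f i), ← sq_abs (g i)]
  nlinarith [two_mul_le_add_sq |f i| |g i|, hw i]

section Kernel

variable {K : ℤ → ℝ} {u v : ℤ → ℝ}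

lemma summable_mul_kernel_sub_fst (hK : Summable K) (hK0 : ∀ m, 0 ≤ K m) {g : ℤ → ℝ}
    (hg : Summable g) (hg0 : ∀ j, 0 ≤ g j) :
    Summable fun p : ℤ × ℤ => g p.1 * K (p.1 - p.2) :=
  (Equiv.prodShear (.refl ℤ) Equiv.subLeft).summable_iff.2 (hg.mul_of_nonneg hK hg0 hK0)

lemma summable_mul_kernel_sub_snd (hK : Summable K) (hK0 : ∀ m, 0 ≤ K m) {g : ℤ → ℝ}
    (hg : Summable g) (hg0 : ∀ j, 0 ≤ g j) :
    Summable fun p : ℤ × ℤ => g p.2 * K (p.1 - p.2) :=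
  ((Equiv.prodComm ℤ ℤ).trans (Equiv.prodShear (.refl ℤ) Equiv.subRight)).summable_iff.2
    (hg.mul_of_nonneg hK hg0 hK0)

lemma summable_sq_sub_mul_kernel (hK : Summable K) (hK0 : ∀ m, 0 ≤ K m)
    (hu : Summable fun j => u j ^ 2) :
    Summable fun p : ℤ × ℤ => (u p.1 - u p.2) ^ 2 * K (p.1 - p.2) := by
  have hu0 : ∀ j, 0 ≤ u j ^ 2 := fun j => sq_nonneg _
  refine .of_nonneg_of_le (fun p => mul_nonneg (sq_nonneg _) (hK0 _)) (fun p => ?_)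
    (((summable_mul_kernel_sub_fst hK hK0 hu hu0).add
      (summable_mul_kernel_sub_snd hK hK0 hu hu0)).mul_left 2)
  have hsq : (u p.1 - u p.2) ^ 2 ≤ 2 * (u p.1 ^ 2 + u p.2 ^ 2) := by
    nlinarith [sq_nonneg (u p.1 + u p.2)]
  nlinarith [mul_le_mul_of_nonneg_right hsq (hK0 (p.1 - p.2))]

lemma summable_abs_sub_mul_kernel (hK : Summable K) (hK0 : ∀ m, 0 ≤ K m)
    (hu : Summable fun j => u j ^ 2) (j : ℤ) :
    Summable fun m => |(u j - u m) * K (j - m)| := by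
  have hrow := (summable_sq_sub_mul_kernel hK hK0 hu).prod_factor j
  have hshift : Summable fun m => K (j - m) := (Equiv.subLeft j).summable_iff.2 hK
  -- a row of the energy is summable, and `|a| ≤ (a² + 1²) / 2`
  simpa using summable_abs_mul_mul_of_summable_sq_mul (g := 1) (fun m => hK0 (j - m)) hrow
    (by simpa using hshift)

lemma summable_abs_sub_mul_sub_mul_kernel (hK : Summable K) (hK0 : ∀ m, 0 ≤ K m)
    (hu : Summable fun j => u j ^ 2) (hv : Summable fun j => v j ^ 2) :
    Summable fun p : ℤ × ℤ => |(u p.1 - u p.2) * (v p.1 - v p.2) * K (p.1 - p.2)| :=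
  summable_abs_mul_mul_of_summable_sq_mul (fun _ => hK0 _)
    (summable_sq_sub_mul_kernel hK hK0 hu) (summable_sq_sub_mul_kernel hK hK0 hv)

lemma summable_abs_sub_mul_fst_mul_kernel (hK : Summable K) (hK0 : ∀ m, 0 ≤ K m)
    (hu : Summable fun j => u j ^ 2) (hv : Summable fun j => v j ^ 2) :
    Summable fun p : ℤ × ℤ => |(u p.1 - u p.2) * v p.1 * K (p.1 - p.2)| :=
  summable_abs_mul_mul_of_summable_sq_mul (fun _ => hK0 _)
    (summable_sq_sub_mul_kernel hK hK0 hu)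
    (summable_mul_kernel_sub_fst hK hK0 hv fun _ => sq_nonneg _)

lemma summable_abs_tsum_sub_mul_kernel_mul (hK : Summable K) (hK0 : ∀ m, 0 ≤ K m)
    (hu : Summable fun j => u j ^ 2) (hv : Summable fun j => v j ^ 2) :
    Summable fun j => |(∑' m, (u j - u m) * K (j - m)) * v j| := by
  have hF := summable_abs_sub_mul_fst_mul_kernel hK hK0 hu hv
  refine .of_nonneg_of_le (fun j => abs_nonneg _) (fun j => ?_) hF.prod
  calc |(∑' m, (u j - u m) * K (j - m)) * v j|
      = ‖∑' m, (u j - u m) * v j * K (j - m)‖ := by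
        rw [Real.norm_eq_abs, ← tsum_mul_right]
        exact congrArg _ (tsum_congr fun m => by ring)
    _ ≤ ∑' m, ‖(u j - u m) * v j * K (j - m)‖ := norm_tsum_le_tsum_norm (hF.prod_factor j)

lemma tsum_tsum_sub_mul_kernel_mul_eq_half_tsum_tsum (hK : Summable K) (hK0 : ∀ m, 0 ≤ K m)
    (hKeven : ∀ m, K (-m) = K m) (hu : Summable fun j => u j ^ 2)
    (hv : Summable fun j => v j ^ 2) :
    ∑' j, (∑' m, (u j - u m) * K (j - m)) * v j =
      1 / 2 * ∑' j, ∑' m, (u j - u m) * (v j - v m) * K (j - m) := by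
  set F : ℤ × ℤ → ℝ := fun p => (u p.1 - u p.2) * v p.1 * K (p.1 - p.2)
  have hF : Summable F := (summable_abs_sub_mul_fst_mul_kernel hK hK0 hu hv).of_abs
  have hsymm : ∀ p : ℤ × ℤ,
      (u p.1 - u p.2) * (v p.1 - v p.2) * K (p.1 - p.2) = F p + F p.swap := fun p => by
    simp only [F, Prod.fst_swap, Prod.snd_swap, ← neg_sub p.1 p.2, hKeven]
    ring
  have hT : Summable fun p : ℤ × ℤ => (u p.1 - u p.2) * (v p.1 - v p.2) * K (p.1 - p.2) :=
    (summable_abs_sub_mul_sub_mul_kernel hK hK0 hu hv).of_abs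
  calc ∑' j, (∑' m, (u j - u m) * K (j - m)) * v j
      = ∑' p, F p := by
        rw [hF.tsum_prod]
        exact tsum_congr fun j => by rw [← tsum_mul_right]; exact tsum_congr fun m => by ring
    _ = 1 / 2 * (∑' p, F p + ∑' p : ℤ × ℤ, F p.swap) := by
        have hswap : ∑' p : ℤ × ℤ, F p.swap = ∑' p, F p :=
          (Equiv.prodComm ℤ ℤ).tsum_eq F
        rw [hswap]; ring
    _ = 1 / 2 * ∑' j, ∑' m, (u j - u m) * (v j - v m) * K (j - m) := by
        rw [← hF.tsum_add hF.prod_symm, ← tsum_congr hsymm, hT.tsum_prod]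

end Kernel

/-- The bilinear (integration by parts) identity for the fractional discrete Laplacian
on `ℓ²` functions, all sums being absolutely convergent. -/
theorem fracLap_bilinear_identity (h s : ℝ) (hh : 0 < h) (hs0 : 0 < s) (hs1 : s < 1)
    (u v : ℤ → ℝ) (hu : Summable fun j : ℤ => (u j) ^ 2)
    (hv : Summable fun j : ℤ => (v j) ^ 2) :
    (∀ j : ℤ, Summable fun m : ℤ => |(u j - u m) * Ksh h s (j - m)|) ∧
    (Summable fun j : ℤ => |fracLap h s u j * v j|) ∧
    (Summable fun p : ℤ × ℤ =>
      |(u p.1 - u p.2) * (v p.1 - v p.2) * Ksh h s (p.1 - p.2)|) ∧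
    h * ∑' j : ℤ, fracLap h s u j * v j =
      h / 2 * ∑' j : ℤ, ∑' m : ℤ, (u j - u m) * (v j - v m) * Ksh h s (j - m) := by
  have hK := summable_Ksh hh hs0 hs1
  have hK0 := Ksh_nonneg hh hs0 hs1
  refine ⟨summable_abs_sub_mul_kernel hK hK0 hu,
    summable_abs_tsum_sub_mul_kernel_mul hK hK0 hu hv,
    summable_abs_sub_mul_sub_mul_kernel hK hK0 hu hv, ?_⟩
  unfold fracLap
  rw [tsum_tsum_sub_mul_kernel_mul_eq_half_tsum_tsum hK hK0 (Ksh_neg h s) hu hv]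
  ring
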